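/- Let m ≥ 2, l : ℕ, and π a permutation of Fin m. Then the cell-permutation map ρ_π at depth l is a bijection of [0,1) onto itself, with inverse the cell-permutation map ρ_{π⁻¹} at depth l. -/

import Mathlib

/-! Writing `x ∈ [0,1)` as `(d + x') / m`, with `d` its leading digit and `x' = fract (m x)`,
shifts the digit sequence by one. On numbers in this form the depth-`(l+1)` map is
`(d + x') / m ↦ (π d + ρ_π x') / m` with `ρ_π` of depth `l`, so induction on the depth shows
that `ρ_π` maps `[0,1)` into itself and that `ρ_σ ∘ ρ_π = ρ_{σπ}` there. -/

/-- The `i`-th base-`m` digit of `x ∈ [0,1)`. -/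
noncomputable def digit (m : ℕ) [NeZero m] (x : ℝ) (i : ℕ) : Fin m :=
  ⟨(⌊x * (m : ℝ) ^ (i + 1)⌋).toNat % m,
    Nat.mod_lt _ (Nat.pos_of_ne_zero (NeZero.ne m))⟩

/-- The cell-permutation map at depth `l` induced by a permutation `π` of the digits. -/
noncomputable def rho (m : ℕ) [NeZero m] (l : ℕ) (π : Equiv.Perm (Fin m)) (x : ℝ) : ℝ :=
  x + ∑ i ∈ Finset.range l,
    (((π (digit m x i) : ℕ) : ℝ) - ((digit m x i : ℕ) : ℝ)) * ((m : ℝ) ^ (i + 1))⁻¹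

open Set

namespace CellPermutation

noncomputable def prependDigit (m : ℕ) (d : Fin m) (x : ℝ) : ℝ := ((d : ℕ) + x) / m

variable {m : ℕ} [NeZero m]

lemma digit_val (x : ℝ) (i : ℕ) : (digit m x i : ℕ) = ⌊x * (m : ℝ) ^ (i + 1)⌋₊ % m := by
  simp [digit, Int.floor_toNat]

lemma prependDigit_mem_Ico (d : Fin m) {x : ℝ} (hx : x ∈ Ico (0 : ℝ) 1) :
    prependDigit m d x ∈ Ico (0 : ℝ) 1 := by
  have hm : (0 : ℝ) < m := by exact_mod_cast Nat.pos_of_ne_zero (NeZero.ne m)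
  have hd : ((d : ℕ) : ℝ) + 1 ≤ m := by exact_mod_cast d.isLt
  constructor
  · unfold prependDigit; exact div_nonneg (by linarith [hx.1]) hm.le
  · rw [prependDigit, div_lt_one hm]; linarith [hx.2]

lemma digit_prependDigit_zero (d : Fin m) {x : ℝ} (hx : x ∈ Ico (0 : ℝ) 1) :
    digit m (prependDigit m d x) 0 = d := by
  have hm : (m : ℝ) ≠ 0 := Nat.cast_ne_zero.2 (NeZero.ne m)
  apply Fin.ext
  rw [digit_val, prependDigit, zero_add, pow_one, div_mul_cancel₀ _ hm, add_comm,
    Nat.floor_add_natCast hx.1, Nat.floor_eq_zero.2 hx.2, zero_add, Nat.mod_eq_of_lt d.isLt]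

lemma digit_prependDigit_succ (d : Fin m) {x : ℝ} (hx : 0 ≤ x) (i : ℕ) :
    digit m (prependDigit m d x) (i + 1) = digit m x i := by
  have hm : (m : ℝ) ≠ 0 := Nat.cast_ne_zero.2 (NeZero.ne m)
  have hscale : prependDigit m d x * (m : ℝ) ^ (i + 1 + 1)
      = x * (m : ℝ) ^ (i + 1) + ((m * (d * m ^ i) : ℕ) : ℝ) := by
    rw [prependDigit]; push_cast; field_simp; ring
  apply Fin.ext
  rw [digit_val, digit_val, hscale, Nat.floor_add_natCast (by positivity), add_comm,
    Nat.mul_add_mod]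

lemma prependDigit_digit_zero_fract {x : ℝ} (hx : x ∈ Ico (0 : ℝ) 1) :
    prependDigit m (digit m x 0) (Int.fract (m * x)) = x := by
  have hm : (0 : ℝ) < m := by exact_mod_cast Nat.pos_of_ne_zero (NeZero.ne m)
  have hmx : 0 ≤ (m : ℝ) * x := mul_nonneg hm.le hx.1
  have hlead : ⌊(m : ℝ) * x⌋₊ < m := by
    rw [Nat.floor_lt hmx]; nlinarith [hx.2]
  have hval : ((digit m x 0 : ℕ) : ℝ) = ⌊(m : ℝ) * x⌋ := by
    rw [digit_val, zero_add, pow_one, mul_comm, Nat.mod_eq_of_lt hlead,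
      ← Int.natCast_floor_eq_floor hmx]
    rfl
  rw [prependDigit, hval, Int.floor_add_fract, mul_div_cancel_left₀ _ hm.ne']

lemma rho_zero (π : Equiv.Perm (Fin m)) (x : ℝ) : rho m 0 π x = x := by
  simp [rho]

lemma rho_one (l : ℕ) (x : ℝ) : rho m l 1 x = x := by
  simp [rho]

lemma rho_succ_prependDigit (l : ℕ) (π : Equiv.Perm (Fin m)) (d : Fin m)
    {x : ℝ} (hx : x ∈ Ico (0 : ℝ) 1) :
    rho m (l + 1) π (prependDigit m d x) = prependDigit m (π d) (rho m l π x) := by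
  have hm : (m : ℝ) ≠ 0 := Nat.cast_ne_zero.2 (NeZero.ne m)
  have hshift : ∀ f : ℕ → ℝ, ∑ i ∈ Finset.range l, f i * ((m : ℝ) ^ (i + 1 + 1))⁻¹
      = (∑ i ∈ Finset.range l, f i * ((m : ℝ) ^ (i + 1))⁻¹) / m := fun f => by
    rw [Finset.sum_div]
    exact Finset.sum_congr rfl fun i _ => by rw [pow_succ]; field_simp
  unfold rho
  rw [Finset.sum_range_succ', digit_prependDigit_zero d hx]
  simp only [digit_prependDigit_succ d hx.1]
  rw [hshift]
  unfold prependDigit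
  field_simp
  ring

lemma rho_mem_Ico (l : ℕ) (π : Equiv.Perm (Fin m)) {x : ℝ} (hx : x ∈ Ico (0 : ℝ) 1) :
    rho m l π x ∈ Ico (0 : ℝ) 1 := by
  induction l generalizing x with
  | zero => rwa [rho_zero π x]
  | succ l ih =>
    have hfract : Int.fract ((m : ℝ) * x) ∈ Ico (0 : ℝ) 1 :=
      ⟨Int.fract_nonneg _, Int.fract_lt_one _⟩
    rw [← prependDigit_digit_zero_fract (m := m) hx, rho_succ_prependDigit l π _ hfract]
    exact prependDigit_mem_Ico _ (ih hfract)

lemma rho_mul (l : ℕ) (σ π : Equiv.Perm (Fin m)) {x : ℝ} (hx : x ∈ Ico (0 : ℝ) 1) :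
    rho m l (σ * π) x = rho m l σ (rho m l π x) := by
  induction l generalizing x with
  | zero => rw [rho_zero, rho_zero, rho_zero]
  | succ l ih =>
    have hfract : Int.fract ((m : ℝ) * x) ∈ Ico (0 : ℝ) 1 :=
      ⟨Int.fract_nonneg _, Int.fract_lt_one _⟩
    rw [← prependDigit_digit_zero_fract (m := m) hx]
    simp only [rho_succ_prependDigit l _ _ hfract,
      rho_succ_prependDigit l _ _ (rho_mem_Ico l π hfract), ih hfract, Equiv.Perm.mul_apply]

lemma rho_inv_rho (l : ℕ) (π : Equiv.Perm (Fin m)) {x : ℝ} (hx : x ∈ Ico (0 : ℝ) 1) :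
    rho m l π⁻¹ (rho m l π x) = x := by
  rw [← rho_mul l _ _ hx, inv_mul_cancel, rho_one]

end CellPermutation

open CellPermutation in
theorem stmt13_general (m : ℕ) [NeZero m] (l : ℕ) (π : Equiv.Perm (Fin m)) :
    Set.BijOn (rho m l π) (Set.Ico (0 : ℝ) 1) (Set.Ico (0 : ℝ) 1) ∧
    (∀ x ∈ Set.Ico (0 : ℝ) 1, rho m l π⁻¹ (rho m l π x) = x) ∧
    (∀ x ∈ Set.Ico (0 : ℝ) 1, rho m l π (rho m l π⁻¹ x) = x) := by
  have hleft : Set.LeftInvOn (rho m l π⁻¹) (rho m l π) (Set.Ico 0 1) :=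
    fun _ hx => rho_inv_rho l π hx
  have hright : Set.RightInvOn (rho m l π⁻¹) (rho m l π) (Set.Ico 0 1) := fun x hx => by
    simpa using rho_inv_rho l π⁻¹ hx
  exact ⟨Set.InvOn.bijOn ⟨hleft, hright⟩ (fun _ hx => rho_mem_Ico l π hx)
    (fun _ hx => rho_mem_Ico l π⁻¹ hx), hleft, hright⟩

theorem stmt13 (m : ℕ) [NeZero m] (hm : 2 ≤ m) (l : ℕ) (π : Equiv.Perm (Fin m)) :
    Set.BijOn (rho m l π) (Set.Ico (0 : ℝ) 1) (Set.Ico (0 : ℝ) 1) ∧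
    (∀ x ∈ Set.Ico (0 : ℝ) 1, rho m l π⁻¹ (rho m l π x) = x) ∧
    (∀ x ∈ Set.Ico (0 : ℝ) 1, rho m l π (rho m l π⁻¹ x) = x) :=
  stmt13_general m l π
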